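/- arXiv:1903.09315 — 2 statements merged into one kernel-verified Lean document; each statement's English description precedes it below -/
import Mathlib

section
/- Let G = (V,E) be a finite simple graph, C ⊂ V a set of nodes, E_C the edges incident to C, and E_H = E \ E_C. If C is not a vertex cut of G (i.e., the subgraph induced by H = V \ C is connected), then the law of the effective inputs (s̃_i)_{i∈H} conditioned on the values (b_e)_{e∈E_C} is the uniform distribution on {x ∈ [0,1)^{|H|} : frac(Σ_{i∈H} x_i) = frac(Σ_{i∈V} s_i − Σ_{i∈C} s̃_i)}; in particular this conditional law depends on the honest inputs (s_i)_{i∈H} only through their sum Σ_{i∈H} s_i. -/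
open MeasureTheory ProbabilityTheory

/-- The edge set of a simple graph `G`, as ordered pairs `(i, j)` with `i < j`. -/
abbrev OrientedEdges {V : Type*} [LinearOrder V] (G : SimpleGraph V) : Type _ :=
  {p : V × V // p.1 < p.2 ∧ G.Adj p.1 p.2}

/-- The oriented incidence matrix of a simple graph. -/
def incidenceMatrix {V : Type*} [LinearOrder V] (G : SimpleGraph V) :
    Matrix V (OrientedEdges G) ℝ :=
  fun i e => if i = e.val.1 then 1 else if i = e.val.2 then -1 else 0

/-!
Reduced mod 1, the masks form a vector `t = (r_{ij})` on the torus indexed by the ordered pairs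
of adjacent vertices, and it is Haar distributed. Both `b_e = r_{ji} - r_{ij}` and
`s̃ = s + ∇b` are functions of `t`. Translating `t` by `c` adds `∇u` to `s̃`, where
`u_e = c_{ji} - c_{ij}`, and changes `b` only on the edges where `u` does not vanish. Since
`G_H` is connected, every zero-sum vector `h` on `H` is the boundary `∇u` of a flow `u`
carried by `E_H` (send `h_j` along a path in `G_H` from `j` to a fixed vertex), so translating
`s̃|_H` by `h` while keeping `b|_{E_C}` is the image of a translation of `t`, which preserves
the Haar measure. The almost sure constraint holds because every column of `∇` sums to zero.
-/

section Boundary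

variable {V : Type*} [LinearOrder V] (G : SimpleGraph V)

/-- `incidenceMatrix` with integer entries, so that it acts on every additive group, the torus
`ℝ/ℤ` in particular. -/
def intIncidence : Matrix V (OrientedEdges G) ℤ :=
  fun i e => if i = e.val.1 then 1 else if i = e.val.2 then -1 else 0

theorem intCast_intIncidence (i : V) (e : OrientedEdges G) :
    (intIncidence G i e : ℝ) = incidenceMatrix G i e := by
  unfold intIncidence incidenceMatrix
  split_ifs <;> simp

variable [Fintype V]

theorem sum_intIncidence (e : OrientedEdges G) : ∑ i, intIncidence G i e = 0 := by
  have hne : e.val.2 ≠ e.val.1 := e.prop.1.ne'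
  simp [intIncidence, Finset.sum_ite, Finset.filter_ne', Finset.filter_eq', hne]

variable [DecidableRel G.Adj] {M : Type*} [AddCommGroup M]

def edgeBoundary (u : OrientedEdges G → M) (i : V) : M :=
  ∑ e, intIncidence G i e • u e

theorem sum_edgeBoundary (u : OrientedEdges G → M) : ∑ i, edgeBoundary G u i = 0 := by
  simp only [edgeBoundary]
  rw [Finset.sum_comm]
  simp [← Finset.sum_smul, sum_intIncidence]

theorem edgeBoundary_add (u w : OrientedEdges G → M) :
    edgeBoundary G (u + w) = edgeBoundary G u + edgeBoundary G w := by
  ext i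
  simp [edgeBoundary, smul_add, Finset.sum_add_distrib]

theorem edgeBoundary_single (e : OrientedEdges G) (m : M) :
    edgeBoundary G (Pi.single e m) = Pi.single e.val.1 m - Pi.single e.val.2 m := by
  ext i
  have hne : e.val.1 ≠ e.val.2 := e.prop.1.ne
  simp only [edgeBoundary, Pi.sub_apply, Pi.single_apply]
  rw [Finset.sum_eq_single e (fun e' _ h => by simp [h]) (by simp)]
  unfold intIncidence
  split_ifs <;> simp_all

/-- The boundaries of the flows that vanish on every edge leaving `s`. -/
def insideBoundaries (s : Set V) : AddSubgroup (V → M) :=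
  (AddSubgroup.pi {e : OrientedEdges G | e.val.1 ∉ s ∨ e.val.2 ∉ s} fun _ => ⊥).map
    { toFun := edgeBoundary G, map_zero' := by ext; simp [edgeBoundary],
      map_add' := edgeBoundary_add G }

theorem single_sub_single_mem_insideBoundaries {s : Set V} {x y : s}
    (hxy : (G.induce s).Adj x y) (m : M) :
    Pi.single x.val m - Pi.single y.val m ∈ insideBoundaries (M := M) G s := by
  have inside (e : OrientedEdges G) (he₁ : e.val.1 ∈ s) (he₂ : e.val.2 ∈ s) (m : M) :
      Pi.single e.val.1 m - Pi.single e.val.2 m ∈ insideBoundaries (M := M) G s :=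
    ⟨Pi.single e m, fun e' he' => by
      have : e' ≠ e := by rintro rfl; simp_all
      simp [this], edgeBoundary_single G e m⟩
  rcases lt_or_gt_of_ne (Subtype.val_injective.ne hxy.ne) with hlt | hgt
  · exact inside ⟨(x, y), hlt, hxy⟩ x.prop y.prop m
  · have := inside ⟨(y, x), hgt, hxy.symm⟩ y.prop x.prop (-m)
    rwa [Pi.single_neg, Pi.single_neg, neg_sub_neg] at this

theorem single_sub_single_mem_insideBoundaries_of_reachable {s : Set V} {x y : s}
    (hxy : (G.induce s).Reachable x y) (m : M) :
    Pi.single x.val m - Pi.single y.val m ∈ insideBoundaries (M := M) G s := by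
  obtain ⟨p⟩ := hxy
  induction p with
  | nil => simp
  | cons hadj _ ih =>
    simpa using add_mem (single_sub_single_mem_insideBoundaries G hadj m) ih

theorem exists_edgeBoundary_eq_of_connected {s : Set V} [Fintype s]
    (hs : (G.induce s).Connected) (h : s → M) (hsum : ∑ i, h i = 0) :
    ∃ u : OrientedEdges G → M,
      (∀ e : OrientedEdges G, e.val.1 ∉ s ∨ e.val.2 ∉ s → u e = 0) ∧
        ∀ i : s, edgeBoundary G u i = h i := by
  obtain ⟨v⟩ := hs.nonempty
  have hmem : ∑ j, (Pi.single j.val (h j) - Pi.single v.val (h j)) ∈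
      insideBoundaries (M := M) G s :=
    sum_mem fun j _ => single_sub_single_mem_insideBoundaries_of_reachable G (hs j v) (h j)
  obtain ⟨u, hu, hbd⟩ := hmem
  refine ⟨u, hu, fun i => ?_⟩
  simp only [AddMonoidHom.coe_mk, ZeroHom.coe_mk] at hbd
  simp [hbd, Finset.sum_apply, Pi.single_apply, Subtype.val_inj, hsum]

end Boundary

theorem map_coe_volume_restrict_Ico :
    (volume.restrict (Set.Ico (0 : ℝ) 1)).map ((↑) : ℝ → UnitAddCircle) = volume := by
  rw [Measure.restrict_congr_set Ico_ae_eq_Ioc]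
  simpa using (UnitAddCircle.measurePreserving_mk 0).map_eq

theorem map_coe_eq_volume_of_iIndepFun {Ω ι : Type*} [MeasurableSpace Ω] {μ : Measure Ω}
    [IsProbabilityMeasure μ] [Fintype ι] {X : ι → Ω → ℝ} (hX : ∀ i, Measurable (X i))
    (hind : iIndepFun X μ) (hunif : ∀ i, μ.map (X i) = volume.restrict (Set.Ico 0 1)) :
    μ.map (fun ω i => (X i ω : UnitAddCircle)) = volume := by
  have hcoe : Measurable ((↑) : ℝ → UnitAddCircle) := AddCircle.measurable_mk'
  have hpi := (hind.comp _ fun _ => hcoe).map_fun_eq_pi_map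
    fun i => (hcoe.comp (hX i)).aemeasurable
  simp only [Function.comp_apply] at hpi
  simp only [hpi, ← Measure.map_map hcoe (hX _), hunif, map_coe_volume_restrict_Ico]
  exact volume_pi.symm

theorem map_comp_const_add_eq {Ω G β : Type*} [MeasurableSpace Ω] [AddGroup G]
    [MeasurableSpace G] [MeasurableAdd G] [MeasurableSpace β] {μ : Measure Ω} {ν : Measure G}
    [ν.IsAddLeftInvariant] {Y : Ω → G} (hY : Measurable Y) (hlaw : μ.map Y = ν)
    {F : G → β} (hF : Measurable F) (c : G) :
    μ.map (fun ω => F (c + Y ω)) = μ.map (fun ω => F (Y ω)) := by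
  have hshift : Measurable (c + · : G → G) := measurable_const_add c
  rw [← Function.comp_def F Y, ← Measure.map_map hF hY, hlaw,
    ← map_add_left_eq_self ν c, Measure.map_map hF hshift, ← hlaw,
    Measure.map_map (hF.comp hshift) hY]
  rfl

theorem UnitAddCircle.equivIco_coe (x : ℝ) :
    (AddCircle.equivIco 1 0 (x : UnitAddCircle) : ℝ) = Int.fract x := by
  simp

theorem UnitAddCircle.measurable_equivIco :
    Measurable fun z : UnitAddCircle => (AddCircle.equivIco 1 0 z : ℝ) :=
  measurable_subtype_coe.comp (AddCircle.measurableEquivIco 1 0).measurable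

section Masks

variable {V : Type*} [LinearOrder V] (G : SimpleGraph V)

abbrev AdjPairs : Type _ := {p : V × V // G.Adj p.1 p.2}

abbrev IncidentEdges (C : Set V) : Type _ :=
  {e : OrientedEdges G // e.val.1 ∈ C ∨ e.val.2 ∈ C}

def edgeDiff {M : Type*} [AddCommGroup M] (t : AdjPairs G → M) (e : OrientedEdges G) : M :=
  t ⟨(e.val.2, e.val.1), e.prop.2.symm⟩ - t ⟨e.val, e.prop.2⟩

theorem edgeDiff_add {M : Type*} [AddCommGroup M] (t t' : AdjPairs G → M) :
    edgeDiff G (t + t') = edgeDiff G t + edgeDiff G t' := by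
  ext e
  simp [edgeDiff, add_sub_add_comm]

theorem edgeDiff_surjective {M : Type*} [AddCommGroup M] :
    Function.Surjective (edgeDiff G (M := M)) := by
  intro u
  refine ⟨fun p => if hlt : p.val.2 < p.val.1 then u ⟨(p.val.2, p.val.1), hlt, p.prop.symm⟩
    else 0, funext fun e => ?_⟩
  simp [edgeDiff, e.prop.1, not_lt_of_gt e.prop.1]

variable [Fintype V] [DecidableRel G.Adj]

/-- The pair `((b_e)_{e ∈ E_C}, (s̃_i)_{i ∈ H})` as a function of the masks `r` taken mod 1. -/
noncomputable def adversaryView (s : V → ℝ) (C : Set V) (t : AdjPairs G → UnitAddCircle) :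
    (IncidentEdges G C → ℝ) × ((Cᶜ : Set V) → UnitAddCircle) :=
  (fun e => AddCircle.equivIco 1 0 (edgeDiff G t e),
   fun i => (s i : UnitAddCircle) + edgeBoundary G (edgeDiff G t) i)

theorem measurable_adversaryView (s : V → ℝ) (C : Set V) :
    Measurable (adversaryView G s C) := by
  have hdiff (e : OrientedEdges G) :
      Measurable fun t : AdjPairs G → UnitAddCircle => edgeDiff G t e :=
    (measurable_pi_apply _).sub (measurable_pi_apply _)
  refine (measurable_pi_lambda _ fun e => ?_).prodMk (measurable_pi_lambda _ fun i => ?_)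
  · exact UnitAddCircle.measurable_equivIco.comp (hdiff e.val)
  · exact (Finset.measurable_sum _ fun e _ =>
      (continuous_zsmul _).measurable.comp (hdiff e)).const_add _

theorem exists_adversaryView_add (C : Set V) [Fintype (Cᶜ : Set V)]
    (hcut : (G.induce (Cᶜ : Set V)).Connected) (s : V → ℝ)
    (h : (Cᶜ : Set V) → UnitAddCircle) (hsum : ∑ i, h i = 0) :
    ∃ c, ∀ t, adversaryView G s C (c + t) =
      ((adversaryView G s C t).1, (adversaryView G s C t).2 + h) := by
  obtain ⟨u, hu₀, hu⟩ := exists_edgeBoundary_eq_of_connected G hcut h hsum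
  obtain ⟨c, rfl⟩ := edgeDiff_surjective G u
  refine ⟨c, fun t => Prod.ext (funext fun e => ?_) (funext fun i => ?_)⟩
  · simp [adversaryView, edgeDiff_add, hu₀ e.val (by simpa using e.prop)]
  · simp only [adversaryView, edgeDiff_add, edgeBoundary_add, Pi.add_apply, hu]
    abel

end Masks

/-- The conditional law is encoded through the joint law with the conditioning data: lying
a.s. on the coset and having a joint law invariant under zero-sum translations of the second
component characterize the Haar measure of the coset as the conditional law. -/
theorem effective_inputs_conditionally_uniform_general
    {V : Type*} [Fintype V] [LinearOrder V]
    (G : SimpleGraph V) [DecidableRel G.Adj]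
    (C : Set V) [DecidablePred (· ∈ C)]
    (hcut : (G.induce (Cᶜ : Set V)).Connected)
    (s : V → ℝ)
    {Ω : Type*} [MeasureSpace Ω] [IsProbabilityMeasure (ℙ : Measure Ω)]
    (r : Ω → V → V → ℝ)
    (hrmeas : ∀ i j, Measurable fun ω => r ω i j)
    (hrindep : iIndepFun
      (fun (p : {p : V × V // G.Adj p.1 p.2}) ω => r ω p.val.1 p.val.2) ℙ)
    (hrunif : ∀ i j, G.Adj i j →
      Measure.map (fun ω => r ω i j) ℙ = volume.restrict (Set.Ico (0:ℝ) 1))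
    (b : Ω → OrientedEdges G → ℝ)
    (hb : ∀ ω (e : OrientedEdges G),
      b ω e = Int.fract (r ω e.val.2 e.val.1 - r ω e.val.1 e.val.2))
    (a : Ω → V → ℝ)
    (ha : ∀ ω i, a ω i = Int.fract (∑ e, incidenceMatrix G i e * b ω e))
    (S : Ω → V → AddCircle (1 : ℝ))
    (hS : ∀ ω i, S ω i = ((s i + a ω i : ℝ) : AddCircle (1 : ℝ))) :
    (∀ᵐ ω ∂(ℙ : Measure Ω),
      ∑ i : (Cᶜ : Set V), S ω i
        = ((∑ i : V, s i : ℝ) : AddCircle (1 : ℝ)) - ∑ i : (C : Set V), S ω i) ∧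
    ∀ h : (Cᶜ : Set V) → AddCircle (1 : ℝ), (∑ i, h i = 0) →
      Measure.map (fun ω =>
          ((fun e : {e : OrientedEdges G // e.val.1 ∈ C ∨ e.val.2 ∈ C} => b ω e),
           fun i : (Cᶜ : Set V) => S ω i + h i)) ℙ
        = Measure.map (fun ω =>
          ((fun e : {e : OrientedEdges G // e.val.1 ∈ C ∨ e.val.2 ∈ C} => b ω e),
           fun i : (Cᶜ : Set V) => S ω i)) ℙ := by
  set T : Ω → AdjPairs G → UnitAddCircle := fun ω p => (r ω p.val.1 p.val.2 : UnitAddCircle)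
  have hbT (ω : Ω) (e : OrientedEdges G) : (b ω e : UnitAddCircle) = edgeDiff G (T ω) e := by
    simp [hb, edgeDiff, T]
  have hST (ω : Ω) (i : V) : S ω i = s i + edgeBoundary G (edgeDiff G (T ω)) i := by
    rw [hS, ha, AddCircle.coe_add, AddCircle.coe_fract, QuotientAddGroup.mk_sum]
    refine congrArg _ (Finset.sum_congr rfl fun e _ => ?_)
    rw [← intCast_intIncidence, ← zsmul_eq_mul, AddCircle.coe_zsmul, hbT]
  refine ⟨.of_forall fun ω => ?_, fun h hsum => ?_⟩
  · rw [eq_sub_iff_add_eq, add_comm]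
    refine (Fintype.sum_subtype_add_sum_subtype (· ∈ C) (S ω)).trans ?_
    simp [hST, Finset.sum_add_distrib, sum_edgeBoundary, QuotientAddGroup.mk_sum]
  have hview (ω : Ω) : ((fun e : IncidentEdges G C => b ω e), fun i : (Cᶜ : Set V) => S ω i) =
      adversaryView G s C (T ω) := by
    refine Prod.ext (funext fun e => ?_) (funext fun i => hST ω i)
    change b ω e = AddCircle.equivIco 1 0 (edgeDiff G (T ω) e)
    rw [← hbT, UnitAddCircle.equivIco_coe, hb, Int.fract_fract]
  obtain ⟨c, hc⟩ := exists_adversaryView_add G C hcut s h hsum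
  have hshifted (ω : Ω) : ((fun e : IncidentEdges G C => b ω e),
      fun i : (Cᶜ : Set V) => S ω i + h i) = adversaryView G s C (c + T ω) := by
    rw [hc, ← hview]
    rfl
  have hT : (ℙ : Measure Ω).map T = volume :=
    map_coe_eq_volume_of_iIndepFun (fun p => hrmeas _ _) hrindep fun p => hrunif _ _ p.prop
  simp only [hview, hshifted]
  exact map_comp_const_add_eq (measurable_pi_lambda _ fun p => AddCircle.measurable_mk'.comp
    (hrmeas _ _)) hT (measurable_adversaryView G s C) c

/-- Privacy of the masking phase: if the passive adversarial agents `C` do not form a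
vertex cut of `G` (the subgraph induced by the honest agents `H = Cᶜ` is connected),
then the law of the honest effective inputs `(s̃ᵢ)_{i ∈ H}`, conditioned on the values
`(b_e)_{e ∈ E_C}` on edges incident to `C`, is uniform on the coset
`{x : frac (∑_{i∈H} x i) = frac (∑_{i∈V} s i - ∑_{i∈C} s̃ i)}` of the zero-sum subgroup
of the torus: jointly with the conditioning data `(b_e)_{e ∈ E_C}`, the honest effective
inputs lie a.s. on that coset, and translating them by any zero-sum vector leaves the
joint law unchanged.  (These two properties characterize the conditional law as the Haar
measure of the coset, and in particular it depends on the honest inputs only through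
their sum.) -/
theorem effective_inputs_conditionally_uniform
    {V : Type*} [Fintype V] [LinearOrder V]
    (G : SimpleGraph V) [DecidableRel G.Adj]
    (C : Set V) [DecidablePred (· ∈ C)]
    (hcut : (G.induce (Cᶜ : Set V)).Connected)
    (s : V → ℝ) (hs : ∀ i, s i ∈ Set.Ico (0 : ℝ) (1 / Fintype.card V))
    {Ω : Type*} [MeasureSpace Ω] [IsProbabilityMeasure (ℙ : Measure Ω)]
    (r : Ω → V → V → ℝ)
    (hrmeas : ∀ i j, Measurable fun ω => r ω i j)
    (hrindep : iIndepFun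
      (fun (p : {p : V × V // G.Adj p.1 p.2}) ω => r ω p.val.1 p.val.2) ℙ)
    (hrunif : ∀ i j, G.Adj i j →
      Measure.map (fun ω => r ω i j) ℙ = volume.restrict (Set.Ico (0:ℝ) 1))
    (b : Ω → OrientedEdges G → ℝ)
    (hb : ∀ ω (e : OrientedEdges G),
      b ω e = Int.fract (r ω e.val.2 e.val.1 - r ω e.val.1 e.val.2))
    (a : Ω → V → ℝ)
    (ha : ∀ ω i, a ω i = Int.fract (∑ e, incidenceMatrix G i e * b ω e))
    (S : Ω → V → AddCircle (1 : ℝ))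
    (hS : ∀ ω i, S ω i = ((s i + a ω i : ℝ) : AddCircle (1 : ℝ))) :
    (∀ᵐ ω ∂(ℙ : Measure Ω),
      ∑ i : (Cᶜ : Set V), S ω i
        = ((∑ i : V, s i : ℝ) : AddCircle (1 : ℝ)) - ∑ i : (C : Set V), S ω i) ∧
    ∀ h : (Cᶜ : Set V) → AddCircle (1 : ℝ), (∑ i, h i = 0) →
      Measure.map (fun ω =>
          ((fun e : {e : OrientedEdges G // e.val.1 ∈ C ∨ e.val.2 ∈ C} => b ω e),
           fun i : (Cᶜ : Set V) => S ω i + h i)) ℙ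
        = Measure.map (fun ω =>
          ((fun e : {e : OrientedEdges G // e.val.1 ∈ C ∨ e.val.2 ∈ C} => b ω e),
           fun i : (Cᶜ : Set V) => S ω i)) ℙ :=
  effective_inputs_conditionally_uniform_general G C hcut s r hrmeas hrindep hrunif b hb a ha S hS
end

section
/- Let A be an n × m matrix with integer entries and rank n − 1 over ℝ, such that 1ₙᵀ A = 0, and let b be uniform on the torus (ℝ/ℤ)^m. Then A·b (computed in (ℝ/ℤ)ⁿ) is uniformly distributed on the closed subgroup {a ∈ (ℝ/ℤ)ⁿ : Σ_i a_i = 0}. -/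
/-
The map `b ↦ A b` is a continuous homomorphism of compact groups, so it pushes Haar measure
forward to a measure that is invariant under translation by every element of its image. That
image is the zero-sum subgroup: over `ℝ` the column condition puts the range of `A` inside the
hyperplane `∑ xᵢ = 0`, the rank condition makes them equal, and every zero-sum point of the
torus lifts to a zero-sum real vector.
-/

open MeasureTheory ProbabilityTheory

instance : Fact ((0 : ℝ) < 1) := ⟨one_pos⟩

lemma Module.finrank_ker_sum_proj (K ι : Type*) [Field K] [Fintype ι] :
    Module.finrank K (LinearMap.ker (∑ i, LinearMap.proj i : (ι → K) →ₗ[K] K)) =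
      Fintype.card ι - 1 := by
  rcases isEmpty_or_nonempty ι with _ | ⟨⟨i₀⟩⟩
  · simpa using Subsingleton.elim _ _
  · classical
    have hne : (∑ i, LinearMap.proj i : (ι → K) →ₗ[K] K) ≠ 0 := fun h => by
      simpa using LinearMap.congr_fun h (Pi.single i₀ 1)
    have := Module.Dual.finrank_ker_add_one_of_ne_zero hne
    simp only [Module.finrank_fintype_fun_eq_card] at this
    omega

lemma AddCircle.coe_sum {ι : Type*} (s : Finset ι) (f : ι → ℝ) {p : ℝ} :
    ((∑ i ∈ s, f i : ℝ) : AddCircle p) = ∑ i ∈ s, (f i : AddCircle p) :=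
  map_sum (QuotientAddGroup.mk' (AddSubgroup.zmultiples p)) f s

lemma AddCircle.exists_lift_sum_eq_zero {ι : Type*} [Fintype ι] {p : ℝ} {h : ι → AddCircle p}
    (hh : ∑ i, h i = 0) :
    ∃ x : ι → ℝ, (∀ i, (x i : AddCircle p) = h i) ∧ ∑ i, x i = 0 := by
  classical
  rcases isEmpty_or_nonempty ι with _ | ⟨⟨i₀⟩⟩
  · exact ⟨0, isEmptyElim, by simp⟩
  choose x hx using fun i => QuotientAddGroup.mk_surjective (h i)
  obtain ⟨k, hk⟩ : ∃ k : ℤ, k • p = ∑ i, x i := by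
    rw [← AddCircle.coe_eq_zero_iff, AddCircle.coe_sum, ← hh]
    simp only [hx]
  refine ⟨x - Pi.single i₀ (k • p), fun i => ?_, by simp [Finset.sum_sub_distrib, hk]⟩
  rcases eq_or_ne i i₀ with rfl | hi
  · simp [AddCircle.coe_period, hx]
  · simp [hi, hx]

lemma MeasureTheory.Measure.map_add_right_map_eq_self_of_mem_range {G H : Type*}
    [MeasurableSpace G] [AddGroup G] [MeasurableAdd G] [MeasurableSpace H] [AddGroup H]
    [MeasurableAdd H] (μ : Measure G) [μ.IsAddRightInvariant] {φ : G →+ H} (hφ : Measurable φ)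
    {h : H} (hh : h ∈ Set.range φ) : (μ.map φ).map (· + h) = μ.map φ := by
  obtain ⟨c, rfl⟩ := hh
  have : (· + φ c) ∘ φ = φ ∘ (· + c) := by ext; simp
  rw [Measure.map_map (measurable_add_const _) hφ, this,
    ← Measure.map_map hφ (measurable_add_const c), map_add_right_eq_self]

namespace Matrix

variable {ι κ : Type*} [Fintype κ]

def intMulVecHom (A : Matrix ι κ ℤ) (M : Type*) [AddCommGroup M] : (κ → M) →+ (ι → M) where
  toFun b i := ∑ j, A i j • b j
  map_zero' := by ext; simp
  map_add' b c := by ext; simp [smul_add, Finset.sum_add_distrib]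

@[simp]
lemma intMulVecHom_apply (A : Matrix ι κ ℤ) {M : Type*} [AddCommGroup M] (b : κ → M) (i : ι) :
    A.intMulVecHom M b i = ∑ j, A i j • b j :=
  rfl

lemma continuous_intMulVecHom (A : Matrix ι κ ℤ) (M : Type*) [AddCommGroup M]
    [TopologicalSpace M] [IsTopologicalAddGroup M] : Continuous (A.intMulVecHom M) :=
  continuous_pi fun i => continuous_finsetSum _ fun j _ =>
    (continuous_zsmul (A i j)).comp (continuous_apply j)

lemma sum_intMulVecHom_eq_zero [Fintype ι] {A : Matrix ι κ ℤ} (hcols : ∀ j, ∑ i, A i j = 0)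
    {M : Type*} [AddCommGroup M] (b : κ → M) : ∑ i, A.intMulVecHom M b i = 0 := by
  simp only [intMulVecHom_apply]
  rw [Finset.sum_comm]
  simp [← Finset.sum_smul, hcols]

lemma mem_range_mulVecLin_iff_sum_eq_zero [Fintype ι] {K : Type*} [Field K] {A : Matrix ι κ K}
    (hrank : A.rank = Fintype.card ι - 1) (hcols : ∀ j, ∑ i, A i j = 0) (x : ι → K) :
    x ∈ LinearMap.range A.mulVecLin ↔ ∑ i, x i = 0 := by
  have hle : LinearMap.range A.mulVecLin ≤ LinearMap.ker (∑ i, LinearMap.proj i) := by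
    rintro _ ⟨y, rfl⟩
    simp [mulVec, dotProduct, Finset.sum_comm (γ := ι), ← Finset.sum_mul, hcols]
  have heq := Submodule.eq_of_le_of_finrank_eq hle <| by
    rw [Module.finrank_ker_sum_proj]; exact hrank
  simp [heq]

lemma range_intMulVecHom_addCircle [Fintype ι] {A : Matrix ι κ ℤ}
    (hrank : (A.map (Int.cast : ℤ → ℝ)).rank = Fintype.card ι - 1)
    (hcols : ∀ j, ∑ i, A i j = 0) (p : ℝ) :
    Set.range (A.intMulVecHom (AddCircle p)) = {a | ∑ i, a i = 0} := by
  ext a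
  constructor
  · rintro ⟨b, rfl⟩
    exact sum_intMulVecHom_eq_zero hcols b
  · intro ha
    obtain ⟨x, hx, hsum⟩ := AddCircle.exists_lift_sum_eq_zero ha
    obtain ⟨y, hy⟩ := (mem_range_mulVecLin_iff_sum_eq_zero hrank
      (fun j => by simp [← Int.cast_sum, hcols]) x).2 hsum
    refine ⟨fun j => (y j : AddCircle p), funext fun i => ?_⟩
    rw [← hx i, ← hy]
    have hterm : ∀ j, A i j • (y j : AddCircle p) = ((A i j : ℝ) * y j : ℝ) := fun j => by
      rw [← zsmul_eq_mul, AddCircle.coe_zsmul]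
    simp only [intMulVecHom_apply, hterm, mulVecLin_apply, mulVec, dotProduct, map_apply,
      AddCircle.coe_sum]

end Matrix

theorem intMatrix_mulVec_uniform_on_zero_sum_subgroup_general (n m : ℕ)
    (A : Matrix (Fin n) (Fin m) ℤ)
    (hrank : (A.map (Int.cast : ℤ → ℝ)).rank = n - 1)
    (hcols : ∀ j, ∑ i, A i j = 0)
    {Ω : Type*} [MeasureSpace Ω] [IsProbabilityMeasure (ℙ : Measure Ω)]
    (B : Ω → Fin m → AddCircle (1 : ℝ))
    (hBmeas : Measurable B)
    (hBunif : Measure.map B ℙ = (volume : Measure (Fin m → AddCircle (1 : ℝ)))) :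
    (Measure.map (fun ω => fun i => ∑ j, A i j • B ω j) ℙ)
        {a : Fin n → AddCircle (1 : ℝ) | ∑ i, a i = 0} = 1 ∧
    ∀ h : Fin n → AddCircle (1 : ℝ), (∑ i, h i = 0) →
      Measure.map (fun a => a + h)
          (Measure.map (fun ω => fun i => ∑ j, A i j • B ω j) ℙ)
        = Measure.map (fun ω => fun i => ∑ j, A i j • B ω j) ℙ := by
  set φ := A.intMulVecHom (AddCircle (1 : ℝ))
  have hφ : Measurable φ := (A.continuous_intMulVecHom _).measurable
  have hrange := A.range_intMulVecHom_addCircle (by simpa using hrank) hcols 1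
  have hlaw : Measure.map (fun ω => fun i => ∑ j, A i j • B ω j) ℙ = Measure.map (φ ∘ B) ℙ :=
    rfl
  refine ⟨?_, fun h hh => ?_⟩
  · have hH : MeasurableSet {a : Fin n → AddCircle (1 : ℝ) | ∑ i, a i = 0} :=
      (continuous_finsetSum _ fun i _ => continuous_apply i).measurable
        (measurableSet_singleton 0)
    have hpre : (φ ∘ B) ⁻¹' {a | ∑ i, a i = 0} = Set.univ :=
      Set.eq_univ_of_forall fun ω => Matrix.sum_intMulVecHom_eq_zero hcols (B ω)
    rw [hlaw, Measure.map_apply (hφ.comp hBmeas) hH, hpre, measure_univ]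
  · rw [hlaw, ← Measure.map_map hφ hBmeas, hBunif]
    exact volume.map_add_right_map_eq_self_of_mem_range hφ (hrange ▸ hh)

/-- If `A` is an `n × m` integer matrix of real rank `n - 1` whose columns each sum to
zero (`1ₙᵀ A = 0`), and `b` is Haar-uniform on the torus `(ℝ/ℤ)^m`, then `A ⬝ b`
(computed in `(ℝ/ℤ)ⁿ`) is uniformly distributed on the closed subgroup
`H = {a : ∑ i, a i = 0}`: its law gives `H` full measure and is invariant under
translation by every element of `H`, which characterizes the Haar probability measure
of `H`. -/
theorem intMatrix_mulVec_uniform_on_zero_sum_subgroup (n m : ℕ) (hn : 1 ≤ n)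
    (A : Matrix (Fin n) (Fin m) ℤ)
    (hrank : (A.map (Int.cast : ℤ → ℝ)).rank = n - 1)
    (hcols : ∀ j, ∑ i, A i j = 0)
    {Ω : Type*} [MeasureSpace Ω] [IsProbabilityMeasure (ℙ : Measure Ω)]
    (B : Ω → Fin m → AddCircle (1 : ℝ))
    (hBmeas : Measurable B)
    (hBunif : Measure.map B ℙ = (volume : Measure (Fin m → AddCircle (1 : ℝ)))) :
    (Measure.map (fun ω => fun i => ∑ j, A i j • B ω j) ℙ)
        {a : Fin n → AddCircle (1 : ℝ) | ∑ i, a i = 0} = 1 ∧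
    ∀ h : Fin n → AddCircle (1 : ℝ), (∑ i, h i = 0) →
      Measure.map (fun a => a + h)
          (Measure.map (fun ω => fun i => ∑ j, A i j • B ω j) ℙ)
        = Measure.map (fun ω => fun i => ∑ j, A i j • B ω j) ℙ :=
  intMatrix_mulVec_uniform_on_zero_sum_subgroup_general n m A hrank hcols B hBmeas hBunif
end
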